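/- The limit as x approaches 0 from the right of log(3(tan x − x)/x³)/log(tan x / x) equals 6/5. -/

import Mathlib

/-!
Near `0`, `tan x / x = 1 + x ^ 2 / 3 + O(x ^ 4)` and
`3 (tan x - x) / x ^ 3 = 1 + 2 x ^ 2 / 5 + O(x ^ 4)`; since `log (1 + t) ~ t`, the quotient of the
logarithms tends to `(2 / 5) / (1 / 3) = 6 / 5`. Concretely, both arguments are
`1 + c(x) * (x ^ 2 / cos x)` with `c(x) = (sin x - x cos x) / x ^ 3` resp.
`(3 sin x - (3 x + x ^ 3) cos x) / x ^ 5`, and the limits of these coefficients follow from the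
alternating Taylor bounds for `sin` and `cos` on `[0, ∞)`, obtained by integrating `cos ≤ 1`
repeatedly.
-/

open Real Set Filter Topology Finset
open scoped Nat

lemma le_of_hasDerivAt_nonneg {f f' : ℝ → ℝ} {a x : ℝ} (hf : ∀ y, HasDerivAt f (f' y) y)
    (hf' : ∀ y, a ≤ y → 0 ≤ f' y) (hx : a ≤ x) : f a ≤ f x :=
  monotoneOn_of_hasDerivWithinAt_nonneg (convex_Ici a)
    (fun y _ ↦ (hf y).continuousAt.continuousWithinAt)
    (fun y _ ↦ (hf y).hasDerivWithinAt)
    (fun y hy ↦ hf' y (interior_subset hy)) self_mem_Ici hx hx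

noncomputable def sinTaylor (n : ℕ) (x : ℝ) : ℝ :=
  ∑ k ∈ range n, (-1) ^ k * x ^ (2 * k + 1) / (2 * k + 1)!

noncomputable def cosTaylor (n : ℕ) (x : ℝ) : ℝ :=
  ∑ k ∈ range n, (-1) ^ k * x ^ (2 * k) / (2 * k)!

lemma hasDerivAt_sinTaylor (n : ℕ) (x : ℝ) : HasDerivAt (sinTaylor n) (cosTaylor n x) x := by
  have h : ∀ k ∈ range n, HasDerivAt (fun y : ℝ ↦ (-1) ^ k * y ^ (2 * k + 1) / (2 * k + 1)!)
      ((-1) ^ k * x ^ (2 * k) / (2 * k)!) x := fun k _ ↦ by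
    refine (((hasDerivAt_pow (2 * k + 1) x).const_mul ((-1 : ℝ) ^ k)).div_const
      ((2 * k + 1)! : ℝ)).congr_deriv ?_
    rw [Nat.factorial_succ]
    push_cast
    field_simp
  exact HasDerivAt.fun_sum h

lemma cosTaylor_succ (n : ℕ) (y : ℝ) :
    cosTaylor (n + 1) y = 1 - ∑ k ∈ range n, (-1) ^ k * y ^ (2 * k + 2) / (2 * k + 2)! := by
  simp [cosTaylor, sum_range_succ', pow_succ, sub_eq_add_neg, add_comm, ← sum_neg_distrib, neg_div,
    mul_add]

lemma hasDerivAt_cosTaylor_succ (n : ℕ) (x : ℝ) :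
    HasDerivAt (cosTaylor (n + 1)) (-sinTaylor n x) x := by
  have h : ∀ k ∈ range n, HasDerivAt (fun y : ℝ ↦ (-1) ^ k * y ^ (2 * k + 2) / (2 * k + 2)!)
      ((-1) ^ k * x ^ (2 * k + 1) / (2 * k + 1)!) x := fun k _ ↦ by
    refine (((hasDerivAt_pow (2 * k + 2) x).const_mul ((-1 : ℝ) ^ k)).div_const
      ((2 * k + 2)! : ℝ)).congr_deriv ?_
    rw [show 2 * k + 2 = (2 * k + 1) + 1 by ring, Nat.factorial_succ]
    push_cast
    field_simp
  rw [funext (cosTaylor_succ n)]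
  exact (HasDerivAt.fun_sum h).const_sub 1

lemma sinTaylor_sub_sin_of_cosTaylor_sub_cos {n : ℕ}
    (h : ∀ y, 0 ≤ y → 0 ≤ (-1) ^ n * (cosTaylor (n + 1) y - cos y)) {x : ℝ} (hx : 0 ≤ x) :
    0 ≤ (-1) ^ n * (sinTaylor (n + 1) x - sin x) := by
  simpa [sinTaylor] using le_of_hasDerivAt_nonneg
    (fun y ↦ ((hasDerivAt_sinTaylor (n + 1) y).sub (hasDerivAt_sin y)).const_mul ((-1) ^ n)) h hx

lemma cosTaylor_sub_cos_of_sinTaylor_sub_sin {n : ℕ}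
    (h : ∀ y, 0 ≤ y → 0 ≤ (-1) ^ n * (sinTaylor (n + 1) y - sin y)) {x : ℝ} (hx : 0 ≤ x) :
    0 ≤ (-1) ^ (n + 1) * (cosTaylor (n + 2) x - cos x) := by
  have hd y := ((hasDerivAt_cosTaylor_succ (n + 1) y).sub (hasDerivAt_cos y)).const_mul
    ((-1 : ℝ) ^ (n + 1))
  simpa [cosTaylor, sum_range_succ'] using
    le_of_hasDerivAt_nonneg hd (fun y hy ↦ by linear_combination h y hy) hx

lemma neg_one_pow_mul_cosTaylor_sub_cos_nonneg (n : ℕ) {x : ℝ} (hx : 0 ≤ x) :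
    0 ≤ (-1) ^ n * (cosTaylor (n + 1) x - cos x) := by
  induction n generalizing x with
  | zero => simpa [cosTaylor] using cos_le_one x
  | succ n ih =>
    exact cosTaylor_sub_cos_of_sinTaylor_sub_sin
      (fun y hy ↦ sinTaylor_sub_sin_of_cosTaylor_sub_cos (fun z hz ↦ ih hz) hy) hx

lemma neg_one_pow_mul_sinTaylor_sub_sin_nonneg (n : ℕ) {x : ℝ} (hx : 0 ≤ x) :
    0 ≤ (-1) ^ n * (sinTaylor (n + 1) x - sin x) :=
  sinTaylor_sub_sin_of_cosTaylor_sub_cos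
    (fun _ hy ↦ neg_one_pow_mul_cosTaylor_sub_cos_nonneg n hy) hx

lemma sin_bounds {x : ℝ} (hx : 0 ≤ x) :
    x - x ^ 3 / 6 + x ^ 5 / 120 - x ^ 7 / 5040 ≤ sin x ∧ sin x ≤ x - x ^ 3 / 6 + x ^ 5 / 120 := by
  have h3 := neg_one_pow_mul_sinTaylor_sub_sin_nonneg 3 hx
  have h2 := neg_one_pow_mul_sinTaylor_sub_sin_nonneg 2 hx
  simp [sinTaylor, sum_range_succ, Nat.factorial] at h2 h3
  constructor <;> linarith

lemma cos_bounds {x : ℝ} (hx : 0 ≤ x) :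
    1 - x ^ 2 / 2 + x ^ 4 / 24 - x ^ 6 / 720 ≤ cos x ∧ cos x ≤ 1 - x ^ 2 / 2 + x ^ 4 / 24 := by
  have h3 := neg_one_pow_mul_cosTaylor_sub_cos_nonneg 3 hx
  have h2 := neg_one_pow_mul_cosTaylor_sub_cos_nonneg 2 hx
  simp [cosTaylor, sum_range_succ, Nat.factorial] at h2 h3
  constructor <;> linarith

lemma tendsto_log_one_add_div_self : Tendsto (fun t : ℝ ↦ log (1 + t) / t) (𝓝[≠] 0) (𝓝 1) := by
  have := hasDerivAt_iff_tendsto_slope_zero.mp (hasDerivAt_log one_ne_zero)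
  simpa [div_eq_inv_mul] using this

lemma tendsto_mul_nhdsNE_zero {α : Type*} {l : Filter α} {a u : α → ℝ} {A : ℝ}
    (ha : Tendsto a l (𝓝 A)) (hA : A ≠ 0) (hu : Tendsto u l (𝓝[≠] 0)) :
    Tendsto (fun x ↦ a x * u x) l (𝓝[≠] 0) := by
  rw [tendsto_nhdsWithin_iff] at hu ⊢
  refine ⟨by simpa using ha.mul hu.1, ?_⟩
  filter_upwards [ha.eventually_ne hA, hu.2] with x hax hux
  exact mul_ne_zero hax hux

theorem tendsto_log_one_add_mul_div_log_one_add_mul {α : Type*} {l : Filter α} {a b u : α → ℝ}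
    {A B : ℝ} (ha : Tendsto a l (𝓝 A)) (hb : Tendsto b l (𝓝 B)) (hA : A ≠ 0) (hB : B ≠ 0)
    (hu : Tendsto u l (𝓝[≠] 0)) :
    Tendsto (fun x ↦ log (1 + a x * u x) / log (1 + b x * u x)) l (𝓝 (A / B)) := by
  have hau := tendsto_log_one_add_div_self.comp (tendsto_mul_nhdsNE_zero ha hA hu)
  have hbu := tendsto_log_one_add_div_self.comp (tendsto_mul_nhdsNE_zero hb hB hu)
  have key := (hau.div hbu one_ne_zero).mul (ha.div hb hB)
  rw [div_one, one_mul] at key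
  refine key.congr' ?_
  filter_upwards [ha.eventually_ne hA, hb.eventually_ne hB, tendsto_nhdsWithin_iff.mp hu |>.2]
    with x hax hbx hux
  rw [mem_compl_singleton_iff] at hux
  simp only [Pi.div_apply, Function.comp_apply]
  field_simp

lemma tendsto_nhdsGT_zero_of_abs_sub_le_sq {f : ℝ → ℝ} {c : ℝ}
    (h : ∀ x ∈ Ioo (0 : ℝ) 1, |f x - c| ≤ x ^ 2) : Tendsto f (𝓝[>] 0) (𝓝 c) := by
  have hsq : Tendsto (fun x : ℝ ↦ x ^ 2) (𝓝[>] 0) (𝓝 0) :=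
    (tendsto_nhdsWithin_of_tendsto_nhds ((continuous_pow 2).tendsto' 0 0 (by simp)))
  have hev : ∀ᶠ x in 𝓝[>] (0 : ℝ), x ∈ Ioo (0 : ℝ) 1 := Ioo_mem_nhdsGT one_pos
  simpa using (squeeze_zero_norm' (hev.mono fun x hx ↦ h x hx) hsq).add_const c

lemma tendsto_sin_sub_mul_cos_div_pow_three :
    Tendsto (fun x ↦ (sin x - x * cos x) / x ^ 3) (𝓝[>] 0) (𝓝 (1 / 3)) := by
  refine tendsto_nhdsGT_zero_of_abs_sub_le_sq fun x ⟨hx0, hx1⟩ ↦ ?_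
  obtain ⟨hs₁, hs₂⟩ := sin_bounds hx0.le
  obtain ⟨hc₁, hc₂⟩ := cos_bounds hx0.le
  have hx3 : 0 < x ^ 3 := by positivity
  rw [abs_le, le_sub_iff_add_le, sub_le_iff_le_add, le_div_iff₀ hx3, div_le_iff₀ hx3]
  constructor <;> nlinarith [pow_le_one₀ hx0.le hx1.le (n := 2), pow_pos hx0 5, pow_pos hx0 7]

lemma tendsto_three_mul_sin_sub_mul_cos_div_pow_five :
    Tendsto (fun x ↦ (3 * sin x - (3 * x + x ^ 3) * cos x) / x ^ 5) (𝓝[>] 0) (𝓝 (2 / 5)) := by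
  refine tendsto_nhdsGT_zero_of_abs_sub_le_sq fun x ⟨hx0, hx1⟩ ↦ ?_
  obtain ⟨hs₁, hs₂⟩ := sin_bounds hx0.le
  obtain ⟨hc₁, hc₂⟩ := cos_bounds hx0.le
  have hx5 : 0 < x ^ 5 := by positivity
  rw [abs_le, le_sub_iff_add_le, sub_le_iff_le_add, le_div_iff₀ hx5, div_le_iff₀ hx5]
  constructor <;> nlinarith [pow_le_one₀ hx0.le hx1.le (n := 2), pow_pos hx0 7, pow_pos hx0 9]

lemma eventually_cos_ne_zero : ∀ᶠ x in 𝓝 (0 : ℝ), cos x ≠ 0 :=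
  continuous_cos.continuousAt.eventually_ne (by simp)

lemma tendsto_sq_div_cos_nhdsNE_zero :
    Tendsto (fun x : ℝ ↦ x ^ 2 / cos x) (𝓝[≠] 0) (𝓝[≠] 0) := by
  refine tendsto_nhdsWithin_iff.2 ⟨?_, ?_⟩
  · have h0 : ContinuousAt (fun x ↦ x ^ 2 / cos x) 0 :=
      (continuousAt_id.pow 2).div continuous_cos.continuousAt (by simp)
    simpa using h0.tendsto.mono_left nhdsWithin_le_nhds
  · filter_upwards [self_mem_nhdsWithin, nhdsWithin_le_nhds eventually_cos_ne_zero] with x hx hc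
    exact div_ne_zero (pow_ne_zero 2 hx) hc

theorem phi_limit_zero :
    Filter.Tendsto
      (fun x : ℝ => Real.log (3 * (Real.tan x - x) / x ^ 3) / Real.log (Real.tan x / x))
      (nhdsWithin 0 (Set.Ioi 0)) (nhds (6 / 5)) := by
  have h := tendsto_log_one_add_mul_div_log_one_add_mul
    tendsto_three_mul_sin_sub_mul_cos_div_pow_five tendsto_sin_sub_mul_cos_div_pow_three
    (by norm_num) (by norm_num)
    (tendsto_sq_div_cos_nhdsNE_zero.mono_left (nhdsWithin_mono 0 fun _ hx ↦ ne_of_gt hx))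
  rw [show (2 / 5 : ℝ) / (1 / 3) = 6 / 5 by norm_num] at h
  refine h.congr' ?_
  filter_upwards [self_mem_nhdsWithin, nhdsWithin_le_nhds eventually_cos_ne_zero] with x hx hc
  have hx : x ≠ 0 := ne_of_gt hx
  rw [tan_eq_sin_div_cos]
  congr 2 <;> field_simp <;> ring
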